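/- arXiv:1711.01829 — 2 statements merged into one kernel-verified Lean document; each statement's English description precedes it below -/
import Mathlib

section
/- For all real u with 0 < u < 1 we have ∫_0^∞ I_1(√u·t)·K_0(t)·t^2 dt = 2√u/(1-u)^2. -/
open MeasureTheory Real

/-- Modified Bessel function of the first kind, order zero. -/
noncomputable def I0 (t : ℝ) : ℝ := (1/π) * ∫ θ in (0:ℝ)..π, Real.exp (t * Real.cos θ)

/-- Modified Bessel function of the second kind, order zero. -/
noncomputable def K0 (t : ℝ) : ℝ := ∫ u in Set.Ioi (0:ℝ), Real.exp (-t * Real.cosh u)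

/-- Modified Bessel function of the first kind, order one: `I₁ = I₀'`. -/
noncomputable def I1 (t : ℝ) : ℝ := deriv I0 t

/-- Modified Bessel function of the second kind, order one: `K₁ = -K₀'`. -/
noncomputable def K1 (t : ℝ) : ℝ := -deriv K0 t

/-!
Expand `I₁(s) = ∑ cₙ sⁿ` with `cₙ = (∫₀^π cos^(n+1)) / (π n!)`, put `s = a t` with `a = √u`,
and integrate termwise against `K₀(t) t²`. The moments `∫₀^∞ tᵐ K₀(t) dt = m! ∫₀^∞ sech^(m+1) = (m!/2) ∫₀^π sinᵐ`
come from Fubini and the substitution `x = arctan (sinh v)`. Since `∫₀^π cos^(n+1)` vanishes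
for even `n` and equals `∫₀^π sin^(n+1)` for odd `n`, Wallis' relation
`∫₀^π sinᵏ · ∫₀^π sin^(k+1) = 2π/(k+1)` makes the `n`-th term `(n+1) aⁿ` for odd `n` and `0`
otherwise, and `∑_{n odd} (n+1) aⁿ = 2a/(1-a²)²`.
-/

open Set Filter Topology
open scoped Nat

theorem integral_sin_pow_mul_integral_sin_pow_succ (n : ℕ) :
    (∫ x in 0..π, sin x ^ n) * (∫ x in 0..π, sin x ^ (n + 1)) = 2 * π / (n + 1) := by
  induction n with
  | zero => norm_num [mul_comm]
  | succ n ih =>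
    rw [integral_sin_pow (n := n)]
    simp only [sin_zero, sin_pi, zero_pow n.succ_ne_zero, zero_mul, sub_self, zero_div, zero_add]
    calc (∫ x in 0..π, sin x ^ (n + 1)) * ((n + 1) / (n + 2) * ∫ x in 0..π, sin x ^ n)
        = (n + 1) / (n + 2) * ((∫ x in 0..π, sin x ^ n) * ∫ x in 0..π, sin x ^ (n + 1)) := by
          ring
      _ = 2 * π / ((n + 1 : ℕ) + 1) := by
          rw [ih]
          push_cast
          field_simp
          ring

theorem integral_cos_pow_eq_integral_sin_pow (n : ℕ) :
    ∫ x in 0..π, cos x ^ n = (1 + (-1) ^ n) / 2 * ∫ x in 0..π, sin x ^ n := by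
  have hc : ∀ a b : ℝ, IntervalIntegrable (fun x => cos x ^ n) volume a b := fun a b =>
    (continuous_cos.pow n).intervalIntegrable a b
  have h_right : ∫ x in π / 2..π, cos x ^ n = (-1) ^ n * ∫ x in 0..π / 2, cos x ^ n := by
    rw [← intervalIntegral.integral_const_mul]
    have := intervalIntegral.integral_comp_sub_left (fun x => cos x ^ n) (a := 0) (b := π / 2) π
    simp only [cos_pi_sub, sub_zero, show π - π / 2 = π / 2 by ring] at this
    simp_rw [← this, neg_pow (cos _)]
  rw [← intervalIntegral.integral_add_adjacent_intervals (hc 0 (π / 2)) (hc (π / 2) π),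
    h_right, EulerSine.integral_cos_pow_eq]
  ring

theorem hasDerivAt_arctan_sinh (v : ℝ) :
    HasDerivAt (fun v => arctan (sinh v)) (cosh v)⁻¹ v := by
  refine ((hasDerivAt_arctan (sinh v)).comp v (hasDerivAt_sinh v)).congr_deriv ?_
  rw [← cosh_sq']
  field_simp [(cosh_pos v).ne']

theorem cos_arctan_sinh (v : ℝ) : cos (arctan (sinh v)) = (cosh v)⁻¹ := by
  rw [cos_arctan, ← cosh_sq', sqrt_sq (cosh_pos v).le, one_div]

theorem tendsto_arctan_sinh_atTop : Tendsto (fun v => arctan (sinh v)) atTop (𝓝 (π / 2)) :=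
  tendsto_nhds_of_tendsto_nhdsWithin <| tendsto_arctan_atTop.comp <| tendsto_atTop_mono'
    _ ((eventually_ge_atTop 0).mono fun _ => self_le_sinh_iff.mpr) tendsto_id

-- `arctan ∘ sinh` is the Gudermannian function: `x = arctan (sinh v)` gives `cos x = sech v`
-- and `dx = sech v dv`.
theorem hasDerivAt_integral_cos_pow_arctan_sinh (n : ℕ) (v : ℝ) :
    HasDerivAt (fun v => ∫ x in 0..arctan (sinh v), cos x ^ n) ((cosh v)⁻¹ ^ (n + 1)) v := by
  have hF := (continuous_cos.pow n).integral_hasStrictDerivAt 0 (arctan (sinh v))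
  refine (hF.hasDerivAt.comp v (hasDerivAt_arctan_sinh v)).congr_deriv ?_
  simp only [Pi.pow_apply, cos_arctan_sinh, pow_succ]

theorem tendsto_integral_cos_pow_arctan_sinh (n : ℕ) :
    Tendsto (fun v => ∫ x in 0..arctan (sinh v), cos x ^ n) atTop
      (𝓝 (∫ x in 0..π / 2, cos x ^ n)) :=
  ((continuous_cos.pow n).integral_hasStrictDerivAt 0 (π / 2)).hasDerivAt.continuousAt.tendsto.comp
    tendsto_arctan_sinh_atTop

theorem integrableOn_inv_cosh_pow (n : ℕ) :
    IntegrableOn (fun v => (cosh v)⁻¹ ^ (n + 1)) (Ioi 0) :=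
  integrableOn_Ioi_deriv_of_nonneg' (fun v _ => hasDerivAt_integral_cos_pow_arctan_sinh n v)
    (fun v _ => by positivity) (tendsto_integral_cos_pow_arctan_sinh n)

theorem integral_inv_cosh_pow (n : ℕ) :
    ∫ v in Ioi 0, (cosh v)⁻¹ ^ (n + 1) = 1 / 2 * ∫ x in 0..π, sin x ^ n := by
  rw [integral_Ioi_of_hasDerivAt_of_nonneg'
    (fun v _ => hasDerivAt_integral_cos_pow_arctan_sinh n v) (fun v _ => by positivity)
    (tendsto_integral_cos_pow_arctan_sinh n), EulerSine.integral_cos_pow_eq]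
  simp

theorem integrableOn_pow_mul_exp_neg_mul (n : ℕ) {b : ℝ} (hb : 0 < b) :
    IntegrableOn (fun t => t ^ n * exp (-t * b)) (Ioi 0) := by
  simpa [mul_comm] using integrableOn_rpow_mul_exp_neg_mul_rpow (p := 1) (s := n)
    (by linarith [n.cast_nonneg (α := ℝ)]) one_pos hb

theorem integral_pow_mul_exp_neg_mul (n : ℕ) {b : ℝ} (hb : 0 < b) :
    ∫ t in Ioi 0, t ^ n * exp (-t * b) = n ! / b ^ (n + 1) := by
  have h := integral_rpow_mul_exp_neg_mul_Ioi (a := n + 1) (by positivity) hb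
  rw [add_sub_cancel_right, Gamma_nat_eq_factorial] at h
  norm_cast at h
  simpa [div_eq_mul_inv, mul_comm] using h

theorem integral_pow_mul_exp_neg_mul_cosh (n : ℕ) (v : ℝ) :
    ∫ t in Ioi 0, t ^ n * exp (-t * cosh v) = n ! * (cosh v)⁻¹ ^ (n + 1) := by
  rw [integral_pow_mul_exp_neg_mul n (cosh_pos v), inv_pow, div_eq_mul_inv]

theorem integrable_pow_mul_exp_neg_mul_cosh (n : ℕ) :
    Integrable (fun p : ℝ × ℝ => p.1 ^ n * exp (-p.1 * cosh p.2))
      ((volume.restrict (Ioi 0)).prod (volume.restrict (Ioi 0))) := by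
  have hcont : Continuous fun p : ℝ × ℝ => p.1 ^ n * exp (-p.1 * cosh p.2) := by fun_prop
  refine (integrable_prod_iff' hcont.aestronglyMeasurable).2 ⟨ae_of_all _ fun v => ?_, ?_⟩
  · exact integrableOn_pow_mul_exp_neg_mul n (cosh_pos v)
  · refine IntegrableOn.congr_fun ((integrableOn_inv_cosh_pow n).const_mul (n ! : ℝ))
      (fun v _ => ?_) measurableSet_Ioi
    rw [← integral_pow_mul_exp_neg_mul_cosh]
    refine setIntegral_congr_fun measurableSet_Ioi fun t (ht : 0 < t) => ?_
    exact (norm_of_nonneg (by positivity)).symm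

theorem integrableOn_pow_mul_K0 (n : ℕ) : IntegrableOn (fun t => t ^ n * K0 t) (Ioi 0) := by
  simpa only [IntegrableOn, K0, ← integral_const_mul] using
    (integrable_pow_mul_exp_neg_mul_cosh n).integral_prod_left

theorem integral_pow_mul_K0 (n : ℕ) :
    ∫ t in Ioi 0, t ^ n * K0 t = n ! / 2 * ∫ x in 0..π, sin x ^ n := by
  calc ∫ t in Ioi 0, t ^ n * K0 t
      = ∫ t in Ioi 0, ∫ v in Ioi 0, t ^ n * exp (-t * cosh v) := by
        simp only [K0, integral_const_mul]
    _ = ∫ v in Ioi 0, ∫ t in Ioi 0, t ^ n * exp (-t * cosh v) :=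
        integral_integral_swap (integrable_pow_mul_exp_neg_mul_cosh n)
    _ = n ! / 2 * ∫ x in 0..π, sin x ^ n := by
        simp_rw [integral_pow_mul_exp_neg_mul_cosh, integral_const_mul, integral_inv_cosh_pow]
        ring

theorem norm_cos_mul_exp_mul_cos_le (x θ : ℝ) : ‖cos θ * exp (x * cos θ)‖ ≤ exp |x| := by
  rw [norm_mul, norm_of_nonneg (exp_pos _).le, norm_eq_abs]
  have hx : x * cos θ ≤ |x| := (le_abs_self _).trans <| by
    rw [abs_mul]
    exact mul_le_of_le_one_right (abs_nonneg x) (abs_cos_le_one θ)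
  calc |cos θ| * exp (x * cos θ) ≤ exp (x * cos θ) :=
        mul_le_of_le_one_left (exp_pos _).le (abs_cos_le_one θ)
    _ ≤ exp |x| := exp_le_exp.mpr hx

theorem hasDerivAt_integral_exp_mul_cos (s : ℝ) :
    HasDerivAt (fun s => ∫ θ in 0..π, exp (s * cos θ))
      (∫ θ in 0..π, cos θ * exp (s * cos θ)) s := by
  have h_bound : ∀ x ∈ Metric.ball s 1, ∀ θ,
      ‖cos θ * exp (x * cos θ)‖ ≤ exp (|s| + 1) := by
    intro x hx θ
    refine (norm_cos_mul_exp_mul_cos_le x θ).trans (exp_le_exp.mpr ?_)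
    rw [Metric.mem_ball, dist_eq_norm] at hx
    linarith [abs_sub_abs_le_abs_sub x s, norm_eq_abs (x - s)]
  refine (intervalIntegral.hasDerivAt_integral_of_dominated_loc_of_deriv_le
    (Metric.ball_mem_nhds s one_pos)
    (.of_forall fun x => (by fun_prop : Continuous _).aestronglyMeasurable)
    ((by fun_prop : Continuous _).intervalIntegrable _ _)
    (by fun_prop : Continuous _).aestronglyMeasurable
    (ae_of_all _ fun θ _ x hx => h_bound x hx θ) intervalIntegrable_const
    (ae_of_all _ fun θ _ x _ => ?_)).2
  simpa [mul_comm] using ((hasDerivAt_id x).mul_const (cos θ)).exp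

theorem I1_eq_integral (s : ℝ) : I1 s = π⁻¹ * ∫ θ in 0..π, cos θ * exp (s * cos θ) := by
  unfold I1 I0
  simp only [one_div]
  exact ((hasDerivAt_integral_exp_mul_cos s).const_mul π⁻¹).deriv

noncomputable def I1Coeff (n : ℕ) : ℝ := (∫ θ in 0..π, cos θ ^ (n + 1)) / (π * n !)

theorem hasSum_I1 (s : ℝ) : HasSum (fun n => I1Coeff n * s ^ n) (I1 s) := by
  have h_lim (θ : ℝ) :
      HasSum (fun n : ℕ => cos θ * ((s * cos θ) ^ n / n !)) (cos θ * exp (s * cos θ)) := by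
    rw [exp_eq_exp_ℝ]
    exact (NormedSpace.expSeries_div_hasSum_exp (s * cos θ)).mul_left (cos θ)
  have h_bound (n : ℕ) (θ : ℝ) :
      ‖cos θ * ((s * cos θ) ^ n / n !)‖ ≤ |s| ^ n / n ! := by
    have hc := abs_cos_le_one θ
    rw [norm_mul, norm_div, norm_pow, norm_mul, norm_eq_abs, norm_eq_abs, norm_eq_abs,
      Nat.abs_cast]
    calc |cos θ| * ((|s| * |cos θ|) ^ n / n !) ≤ 1 * ((|s| * 1) ^ n / n !) := by gcongr
      _ = |s| ^ n / n ! := by ring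
  have h := (intervalIntegral.hasSum_integral_of_dominated_convergence (μ := volume)
    (a := 0) (b := π) (fun n _ => |s| ^ n / n !)
    (fun n => (by fun_prop : Continuous _).aestronglyMeasurable)
    (fun n => ae_of_all _ fun θ _ => h_bound n θ)
    (ae_of_all _ fun _ _ => summable_pow_div_factorial |s|) intervalIntegrable_const
    (ae_of_all _ fun θ _ => h_lim θ)).mul_left π⁻¹
  rw [← I1_eq_integral] at h
  refine h.congr_fun fun n => ?_
  have h_term (θ : ℝ) : cos θ * ((s * cos θ) ^ n / n !) = s ^ n / n ! * cos θ ^ (n + 1) := by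
    ring
  simp_rw [h_term, intervalIntegral.integral_const_mul, I1Coeff]
  field_simp

theorem K0_nonneg (t : ℝ) : 0 ≤ K0 t :=
  integral_nonneg fun _ => (exp_pos _).le

theorem I1Coeff_mul_integral_pow_mul_K0 (n : ℕ) :
    I1Coeff n * ∫ t in Ioi 0, t ^ (n + 2) * K0 t = (n + 1) * (1 - (-1) ^ n) / 2 := by
  have hW := integral_sin_pow_mul_integral_sin_pow_succ (n + 1)
  rw [I1Coeff, integral_pow_mul_K0, integral_cos_pow_eq_integral_sin_pow]
  calc (1 + (-1) ^ (n + 1)) / 2 * (∫ x in 0..π, sin x ^ (n + 1)) / (π * n !) *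
        ((n + 2)! / 2 * ∫ x in 0..π, sin x ^ (n + 2))
      = (1 - (-1) ^ n) * (n + 2) * (n + 1) / (4 * π) *
          ((∫ x in 0..π, sin x ^ (n + 1)) * ∫ x in 0..π, sin x ^ (n + 1 + 1)) := by
        rw [Nat.factorial_succ, Nat.factorial_succ, pow_succ]
        push_cast
        field_simp
        ring
    _ = (n + 1) * (1 - (-1) ^ n) / 2 := by
        rw [hW]
        push_cast
        field_simp
        ring

theorem hasSum_odd_part_succ_mul_geometric {x : ℝ} (hx : |x| < 1) :
    HasSum (fun n : ℕ => (n + 1) * (1 - (-1) ^ n) / 2 * x ^ n) (2 * x / (1 - x ^ 2) ^ 2) := by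
  have hp := hasSum_choose_mul_geometric_of_norm_lt_one 1 (r := x) hx
  have hm := hasSum_choose_mul_geometric_of_norm_lt_one 1 (r := -x) (by rwa [norm_neg])
  have h1 : 1 - x ≠ 0 := by linarith [le_abs_self x]
  have h2 : 1 + x ≠ 0 := by linarith [neg_abs_le x]
  have hval : 2 * x / (1 - x ^ 2) ^ 2 = (1 / (1 - x) ^ (1 + 1) - 1 / (1 - -x) ^ (1 + 1)) / 2 := by
    rw [sub_neg_eq_add, show 1 - x ^ 2 = (1 - x) * (1 + x) by ring]
    field_simp
    ring
  rw [hval]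
  refine ((hp.sub hm).div_const 2).congr_fun fun n => ?_
  simp only [Nat.choose_one_right, neg_pow x]
  push_cast
  ring

theorem integral_I1_mul_K0_mul_sq {a : ℝ} (ha : |a| < 1) :
    ∫ t in Ioi 0, I1 (a * t) * K0 t * t ^ 2 = 2 * a / (1 - a ^ 2) ^ 2 := by
  set F : ℕ → ℝ → ℝ := fun n t => I1Coeff n * a ^ n * (t ^ (n + 2) * K0 t)
  have hF_sum (t : ℝ) : HasSum (fun n => F n t) (I1 (a * t) * K0 t * t ^ 2) := by
    rw [mul_assoc]
    refine ((hasSum_I1 (a * t)).mul_right (K0 t * t ^ 2)).congr_fun fun n => ?_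
    simp only [F, mul_pow, pow_add]
    ring
  have hF_int (n : ℕ) : IntegrableOn (F n) (Ioi 0) :=
    (integrableOn_pow_mul_K0 (n + 2)).const_mul _
  have hF_integral (n : ℕ) :
      ∫ t in Ioi 0, F n t = (n + 1) * (1 - (-1) ^ n) / 2 * a ^ n := by
    rw [integral_const_mul, mul_right_comm, I1Coeff_mul_integral_pow_mul_K0]
  have hF_norm (n : ℕ) : ∫ t in Ioi 0, ‖F n t‖ = |∫ t in Ioi 0, F n t| := by
    have hg : ∀ t ∈ Ioi (0 : ℝ), 0 ≤ t ^ (n + 2) * K0 t := fun t (ht : 0 < t) =>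
      mul_nonneg (by positivity) (K0_nonneg t)
    calc ∫ t in Ioi 0, ‖F n t‖ = ∫ t in Ioi 0, |I1Coeff n * a ^ n| * (t ^ (n + 2) * K0 t) :=
          setIntegral_congr_fun measurableSet_Ioi fun t ht => by
            rw [norm_mul, norm_eq_abs, norm_of_nonneg (hg t ht)]
      _ = |∫ t in Ioi 0, F n t| := by
          rw [integral_const_mul, integral_const_mul, abs_mul (I1Coeff n * a ^ n),
            abs_of_nonneg (setIntegral_nonneg measurableSet_Ioi hg)]
  have h := hasSum_integral_of_summable_integral_norm hF_int
    (by simpa only [hF_norm, hF_integral] using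
      (hasSum_odd_part_succ_mul_geometric ha).summable.abs)
  simp only [hF_integral, fun t => (hF_sum t).tsum_eq] at h
  exact h.unique (hasSum_odd_part_succ_mul_geometric ha)

theorem weber_schafheitlin_I1K0_t2 (u : ℝ) (hu0 : 0 < u) (hu1 : u < 1) :
    ∫ t in Set.Ioi (0:ℝ), I1 (Real.sqrt u * t) * K0 t * t^2
      = 2 * Real.sqrt u / (1 - u)^2 := by
  have hsqrt : |√u| < 1 := by
    rw [abs_of_nonneg (sqrt_nonneg u), sqrt_lt' one_pos]
    linarith
  rw [integral_I1_mul_K0_mul_sq hsqrt, sq_sqrt hu0.le]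
end

section
/- (Bronstein–Mulders–Weil descent formula) With ð = t·d/dt and the recursively defined operators 𝓛_{n+1,k} (𝓛_{n+1,0}=id, 𝓛_{n+1,1}=ð, 𝓛_{n+1,k+1}=ð𝓛_{n+1,k} − k(n+1−k)t²𝓛_{n+1,k−1}), for all integers 0 ≤ j ≤ n and 0 ≤ k ≤ n we have 𝓛_{n+1,k}{[I_0(t)]^j [K_0(t)]^{n−j}} = Σ_{ℓ=0}^{k} [k!/(ℓ!(k−ℓ)!)]·[j!/(j−ℓ)!]·[(n−j)!/(n−j−k+ℓ)!]·[ðI_0(t)]^ℓ [I_0(t)]^{j−ℓ} [ðK_0(t)]^{k−ℓ} [K_0(t)]^{n−j−k+ℓ}, with the convention 1/m! = 0 for negative integers m. -/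
open MeasureTheory Real

/-- The operator `ð = t·d/dt`. -/
noncomputable def eth (f : ℝ → ℝ) : ℝ → ℝ := fun t => t * deriv f t

/-- The Bronstein–Mulders–Weil operators `𝓛_{n+1,k}` (parametrized here by `n`). -/
noncomputable def BMW (n : ℕ) : ℕ → (ℝ → ℝ) → (ℝ → ℝ)
  | 0, f => f
  | 1, f => eth f
  | (k+2), f => fun t =>
      eth (BMW n (k+1) f) t - (k+1) * (n + 1 - (k+1)) * t^2 * BMW n k f t

/-!
Since `ð` is a derivation, the recursion for `𝓛_{n+1,k}` says that on `t > 0` the sequence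
`w_k = 𝓛_{n+1,k} w_0` solves `ð w_k = w_{k+1} + k(n+1-k) t² w_{k-1}`. If `ð f = g` and
`ð g = t² f`, then `ð` trades one factor `f` for a `g` and one `g` for `t² f`, so
`p ↦ j^{(p)} g^p f^{j-p}` solves this recursion with `n = j`. By Leibniz's rule the binomial
convolution `Σ C(k,p) u_p v_{k-p}` of solutions with parameters `α` and `β` solves it with
parameter `α + β`: the raising terms recombine by Pascal's rule and the lowering terms add up
to `k(α+β+1-k)`. Applying this to `j` factors `I₀` and `n - j` factors `K₀` gives the formula.
-/

open Set Filter Finset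

theorem I0_pos (t : ℝ) : 0 < I0 t := by
  have hint : 0 < ∫ θ in (0:ℝ)..π, exp (t * cos θ) :=
    intervalIntegral.intervalIntegral_pos_of_pos
      ((by fun_prop : Continuous _).intervalIntegrable _ _) (fun _ => exp_pos _) pi_pos
  unfold I0
  have := pi_pos
  positivity

theorem differentiableAt_I0 (t : ℝ) : DifferentiableAt ℝ I0 t := by
  have hbound : ∀ θ, ∀ x ∈ Metric.ball t 1, ‖exp (x * cos θ) * cos θ‖ ≤ exp (|t| + 1) := by
    intro θ x hx
    have hx' : |x| < |t| + 1 := by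
      have := abs_sub_abs_le_abs_sub x t
      rw [Metric.mem_ball, Real.dist_eq] at hx
      linarith
    have hcos := abs_cos_le_one θ
    rw [norm_mul, Real.norm_eq_abs, abs_of_pos (exp_pos _), Real.norm_eq_abs]
    calc exp (x * cos θ) * |cos θ| ≤ exp (x * cos θ) * 1 := by gcongr
      _ ≤ exp (|t| + 1) := by
        rw [mul_one, exp_le_exp]
        nlinarith [le_abs_self (x * cos θ), abs_mul x (cos θ), abs_nonneg x, abs_nonneg (cos θ)]
  obtain ⟨-, hd⟩ := intervalIntegral.hasDerivAt_integral_of_dominated_loc_of_deriv_le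
    (F := fun x θ => exp (x * cos θ)) (F' := fun x θ => exp (x * cos θ) * cos θ)
    (a := 0) (b := π) (bound := fun _ => exp (|t| + 1))
    (Metric.ball_mem_nhds t one_pos) (Eventually.of_forall fun _ => by fun_prop)
    ((by fun_prop : Continuous _).intervalIntegrable _ _) (by fun_prop)
    (Eventually.of_forall fun θ _ => hbound θ)
    (intervalIntegrable_const (μ := volume))
    (Eventually.of_forall fun θ _ x _ => by
      simpa using ((hasDerivAt_id x).mul_const (cos θ)).exp)
  exact (hd.const_mul (1 / π)).differentiableAt

theorem self_le_cosh {u : ℝ} (hu : 0 ≤ u) : u ≤ cosh u :=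
  (self_le_sinh_iff.2 hu).trans (sinh_lt_cosh u).le

theorem integrableOn_exp_neg_mul_cosh {t : ℝ} (ht : 0 < t) :
    IntegrableOn (fun u => exp (-t * cosh u)) (Ioi 0) := by
  refine (exp_neg_integrableOn_Ioi 0 ht).mono' (by fun_prop) ?_
  filter_upwards [ae_restrict_mem measurableSet_Ioi] with u hu
  rw [Real.norm_eq_abs, abs_of_pos (exp_pos _), exp_le_exp]
  nlinarith [self_le_cosh (le_of_lt hu)]

theorem K0_pos {t : ℝ} (ht : 0 < t) : 0 < K0 t := by
  refine (integral_pos_iff_support_of_nonneg (fun _ => (exp_pos _).le)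
    (integrableOn_exp_neg_mul_cosh ht)).2 ?_
  simp [Function.support, (exp_pos _).ne']

theorem differentiableAt_K0 {t : ℝ} (ht : 0 < t) : DifferentiableAt ℝ K0 t := by
  have hbound : ∀ u, ∀ x ∈ Metric.ball t (t / 2),
      ‖exp (-x * cosh u) * -cosh u‖ ≤ 4 / t * exp (-(t / 4) * cosh u) := by
    intro u x hx
    rw [Metric.mem_ball, Real.dist_eq, abs_lt] at hx
    have hc := cosh_pos u
    have hlin : t / 4 * cosh u ≤ exp (t / 4 * cosh u) :=
      (le_add_of_nonneg_right zero_le_one).trans (add_one_le_exp _)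
    rw [norm_mul, norm_neg, Real.norm_eq_abs, abs_of_pos (exp_pos _), Real.norm_eq_abs,
      abs_of_pos hc]
    calc exp (-x * cosh u) * cosh u ≤ exp (-(t / 2) * cosh u) * cosh u := by
          gcongr; nlinarith
      _ = exp (-(t / 4) * cosh u) * (exp (-(t / 4) * cosh u) * cosh u) := by
          rw [← mul_assoc, ← exp_add]; ring_nf
      _ ≤ exp (-(t / 4) * cosh u) * (4 / t) := by
          gcongr
          have hc' : exp (-(t / 4) * cosh u) * cosh u =
              4 / t * (t / 4 * cosh u / exp (t / 4 * cosh u)) := by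
            rw [neg_mul, exp_neg]
            field_simp
          rw [hc']
          exact mul_le_of_le_one_right (by positivity) (div_le_one_of_le₀ hlin (exp_pos _).le)
      _ = _ := mul_comm _ _
  obtain ⟨-, hd⟩ := hasDerivAt_integral_of_dominated_loc_of_deriv_le
    (μ := volume.restrict (Ioi 0)) (F := fun x u => exp (-x * cosh u))
    (F' := fun x u => exp (-x * cosh u) * -cosh u)
    (bound := fun u => 4 / t * exp (-(t / 4) * cosh u))
    (Metric.ball_mem_nhds t (half_pos ht)) (Eventually.of_forall fun _ => by fun_prop)
    (integrableOn_exp_neg_mul_cosh ht) (by fun_prop)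
    (Eventually.of_forall fun u x hx => hbound u x hx)
    ((integrableOn_exp_neg_mul_cosh (by positivity)).const_mul _)
    (Eventually.of_forall fun u x _ => by
      simpa using ((hasDerivAt_neg x).mul_const (cosh u)).exp)
  exact hd.differentiableAt

theorem sum_antidiagonal_choose_succ_mul_mul {R : Type*} [CommRing R] (a b : ℕ → R) (k : ℕ) :
    ∑ x ∈ antidiagonal (k + 1), ((k + 1).choose x.1 : R) * (a x.1 * b x.2) =
      ∑ x ∈ antidiagonal k,
        (k.choose x.1 : R) * (a (x.1 + 1) * b x.2 + a x.1 * b (x.2 + 1)) := by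
  rw [Finset.sum_antidiagonal_choose_succ_mul (fun p q => a p * b q), ← Finset.sum_add_distrib]
  refine Finset.sum_congr rfl fun x hx => ?_
  rw [Nat.choose_symm_of_eq_add (mem_antidiagonal.1 hx).symm]
  ring

theorem sum_antidiagonal_choose_mul_lower {R : Type*} [CommRing R] (α β : R) (a b : ℕ → R)
    (k : ℕ) :
    ∑ x ∈ antidiagonal k, (k.choose x.1 : R) *
        (x.1 * (α + 1 - x.1) * a (x.1 - 1) * b x.2 + x.2 * (β + 1 - x.2) * a x.1 * b (x.2 - 1)) =
      k * (α + β + 1 - k) *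
        ∑ x ∈ antidiagonal (k - 1), ((k - 1).choose x.1 : R) * (a x.1 * b x.2) := by
  rcases k with _ | m
  · simp
  simp only [mul_add, Finset.sum_add_distrib]
  rw [Nat.sum_antidiagonal_succ, Nat.sum_antidiagonal_succ', Finset.mul_sum]
  simp only [Nat.cast_zero, zero_mul, mul_zero, zero_add, Nat.add_sub_cancel,
    ← Finset.sum_add_distrib]
  refine Finset.sum_congr rfl fun x hx => ?_
  have hpq : x.1 + x.2 = m := mem_antidiagonal.1 hx
  have h1 : ((m + 1).choose (x.1 + 1) : R) * (x.1 + 1) = (m + 1) * m.choose x.1 := by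
    simpa using congrArg (Nat.cast : ℕ → R) (Nat.add_one_mul_choose_eq m x.1).symm
  have h2 : ((m + 1).choose x.1 : R) * (x.2 + 1) = (m + 1) * m.choose x.1 := by
    have := Nat.choose_mul_succ_eq m x.1
    rw [show m + 1 - x.1 = x.2 + 1 by omega] at this
    simpa [mul_comm] using congrArg (Nat.cast : ℕ → R) this.symm
  have hpq' : (x.1 : R) + x.2 = m := by simpa using congrArg (Nat.cast : ℕ → R) hpq
  push_cast
  linear_combination (α - x.1) * a x.1 * b x.2 * h1 + (β - x.2) * a x.1 * b x.2 * h2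
    - (m + 1) * m.choose x.1 * a x.1 * b x.2 * hpq'

/-- `w k = 𝓛_{α+1,k} (w 0)` on `t > 0`, in the form `ð w_k = w_{k+1} + k(α+1-k) t² w_{k-1}`;
at `k = 0` the truncated `k - 1` is harmless because its coefficient vanishes. -/
def BMWRecurrence (α : ℝ) (w : ℕ → ℝ → ℝ) : Prop :=
  ∀ k t, 0 < t → HasDerivAt (w k) ((w (k + 1) t + k * (α + 1 - k) * t ^ 2 * w (k - 1) t) / t) t

theorem BMWRecurrence.bmw_eq {n : ℕ} {w : ℕ → ℝ → ℝ} (hw : BMWRecurrence n w) (k : ℕ) {t : ℝ}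
    (ht : 0 < t) : BMW n k (w 0) t = w k t := by
  suffices ∀ k, (∀ t, 0 < t → BMW n k (w 0) t = w k t) ∧
      ∀ t, 0 < t → BMW n (k + 1) (w 0) t = w (k + 1) t from (this k).1 t ht
  have eth_eq {k : ℕ} (hk : ∀ t, 0 < t → BMW n k (w 0) t = w k t) {t : ℝ} (ht : 0 < t) :
      eth (BMW n k (w 0)) t = w (k + 1) t + k * (n + 1 - k) * t ^ 2 * w (k - 1) t := by
    have hloc : BMW n k (w 0) =ᶠ[nhds t] w k :=
      Filter.eventually_of_mem (Ioi_mem_nhds ht) hk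
    rw [eth, hloc.deriv_eq, (hw k t ht).deriv, mul_div_cancel₀ _ ht.ne']
  intro k
  induction k with
  | zero =>
    refine ⟨fun t _ => rfl, fun t ht => ?_⟩
    simpa [BMW] using eth_eq (k := 0) (fun _ _ => rfl) ht
  | succ k ih =>
    refine ⟨ih.2, fun t ht => ?_⟩
    simp only [BMW, eth_eq ih.2 ht, ih.1 t ht]
    push_cast
    ring

noncomputable def binomialConvolution (u v : ℕ → ℝ → ℝ) (k : ℕ) (t : ℝ) : ℝ :=
  ∑ x ∈ antidiagonal k, (k.choose x.1 : ℝ) * (u x.1 t * v x.2 t)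

theorem BMWRecurrence.binomialConvolution {α β : ℝ} {u v : ℕ → ℝ → ℝ} (hu : BMWRecurrence α u)
    (hv : BMWRecurrence β v) : BMWRecurrence (α + β) (binomialConvolution u v) := by
  intro k t ht
  refine (HasDerivAt.fun_sum (u := antidiagonal k) fun x _ =>
    ((hu x.1 t ht).fun_mul (hv x.2 t ht)).const_mul (k.choose x.1 : ℝ)).congr_deriv ?_
  rw [eq_div_iff ht.ne', Finset.sum_mul]
  calc _ = ∑ x ∈ antidiagonal k, (k.choose x.1 : ℝ) *
          (u (x.1 + 1) t * v x.2 t + u x.1 t * v (x.2 + 1) t) +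
        t ^ 2 * ∑ x ∈ antidiagonal k, (k.choose x.1 : ℝ) *
          (x.1 * (α + 1 - x.1) * u (x.1 - 1) t * v x.2 t +
            x.2 * (β + 1 - x.2) * u x.1 t * v (x.2 - 1) t) := by
        rw [Finset.mul_sum, ← Finset.sum_add_distrib]
        refine Finset.sum_congr rfl fun x _ => ?_
        field_simp
        ring
    _ = _ := by
        rw [← sum_antidiagonal_choose_succ_mul_mul (u · t) (v · t),
          sum_antidiagonal_choose_mul_lower α β (u · t) (v · t)]
        simp only [_root_.binomialConvolution]
        ring

noncomputable def descPowSeq (j : ℕ) (f g : ℝ → ℝ) (p : ℕ) (t : ℝ) : ℝ :=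
  j.descFactorial p * (g t ^ p * f t ^ (j - p))

theorem bmwRecurrence_descPowSeq (j : ℕ) {f g : ℝ → ℝ}
    (hf : ∀ t, 0 < t → HasDerivAt f (g t / t) t) (hg : ∀ t, 0 < t → HasDerivAt g (t * f t) t) :
    BMWRecurrence j (descPowSeq j f g) := by
  intro p t ht
  refine ((((hg t ht).fun_pow p).fun_mul ((hf t ht).fun_pow (j - p))).const_mul
    (j.descFactorial p : ℝ)).congr_deriv ?_
  rw [eq_div_iff ht.ne']
  simp only [descPowSeq]
  rcases p with _ | q
  · simp only [Nat.descFactorial_one, Nat.descFactorial_zero, Nat.cast_zero, Nat.cast_one,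
      zero_mul, add_zero, pow_zero, pow_one, tsub_zero, one_mul, zero_add]
    field_simp
  rcases lt_or_ge j (q + 1) with hjq | hqj
  · rw [Nat.descFactorial_of_lt hjq, Nat.descFactorial_of_lt (by omega)]
    rcases lt_or_ge j q with hj | hqj
    · simp [Nat.descFactorial_of_lt hj]
    · obtain rfl : j = q := by omega
      simp
  · obtain ⟨m, rfl⟩ := Nat.exists_eq_add_of_le hqj
    rw [Nat.descFactorial_succ _ (q + 1), Nat.descFactorial_succ _ q,
      show q + 1 + m - (q + 1 + 1) = m - 1 by omega, show q + 1 + m - (q + 1) = m by omega,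
      Nat.add_sub_cancel, show q + 1 + m - q = m + 1 by omega]
    field_simp
    push_cast
    ring

/-- If `eth f` were not differentiable at `t`, its `deriv` would be the junk value `0`, whereas
the equation forces it to be `t * f t ≠ 0`. -/
theorem hasDerivAt_eth_of_eth_eth_eq {f : ℝ → ℝ} {t : ℝ} (h : eth (eth f) t = t ^ 2 * f t)
    (ht : t ≠ 0) (hf : f t ≠ 0) : HasDerivAt (eth f) (t * f t) t := by
  have hderiv : deriv (eth f) t = t * f t :=
    mul_left_cancel₀ ht (by rw [← eth, h]; ring)
  have hdiff : DifferentiableAt ℝ (eth f) t := by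
    by_contra hnd
    rw [deriv_zero_of_not_differentiableAt hnd] at hderiv
    exact mul_ne_zero ht hf hderiv.symm
  exact hderiv ▸ hdiff.hasDerivAt

theorem bmwRecurrence_descPowSeq_eth (j : ℕ) {f : ℝ → ℝ}
    (hdiff : ∀ t, 0 < t → DifferentiableAt ℝ f t) (hne : ∀ t, 0 < t → f t ≠ 0)
    (hode : ∀ t, 0 < t → eth (eth f) t = t ^ 2 * f t) :
    BMWRecurrence j (descPowSeq j f (eth f)) :=
  bmwRecurrence_descPowSeq j
    (fun t ht => by simpa [eth, ht.ne'] using (hdiff t ht).hasDerivAt)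
    (fun t ht => hasDerivAt_eth_of_eth_eth_eq (hode t ht) ht.ne' (hne t ht))

theorem bronstein_mulders_weil_descent (n j : ℕ) (hj : j ≤ n)
    (hI : ∀ t : ℝ, 0 < t → eth (eth I0) t = t^2 * I0 t)
    (hK : ∀ t : ℝ, 0 < t → eth (eth K0) t = t^2 * K0 t) :
    ∀ k : ℕ, k ≤ n → ∀ t : ℝ, 0 < t →
      BMW n k (fun s => (I0 s)^j * (K0 s)^(n-j)) t
        = ∑ ℓ ∈ Finset.range (k+1),
            ((k.choose ℓ : ℝ) * (j.descFactorial ℓ) * ((n-j).descFactorial (k-ℓ))) *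
              (eth I0 t)^ℓ * (I0 t)^(j-ℓ) * (eth K0 t)^(k-ℓ) * (K0 t)^(n-j-(k-ℓ)) := by
  intro k _ t ht
  have hw := (bmwRecurrence_descPowSeq_eth j (fun t _ => differentiableAt_I0 t)
    (fun t _ => (I0_pos t).ne') hI).binomialConvolution
    (bmwRecurrence_descPowSeq_eth (n - j) (fun _ => differentiableAt_K0)
      (fun _ ht => (K0_pos ht).ne') hK)
  rw [Nat.cast_sub hj, add_sub_cancel] at hw
  have h0 : binomialConvolution (descPowSeq j I0 (eth I0)) (descPowSeq (n - j) K0 (eth K0)) 0 =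
      fun s => I0 s ^ j * K0 s ^ (n - j) := by
    funext s
    simp [binomialConvolution, descPowSeq]
  rw [← h0, hw.bmw_eq k ht, binomialConvolution, Nat.sum_antidiagonal_eq_sum_range_succ_mk]
  refine Finset.sum_congr rfl fun ℓ _ => ?_
  simp only [descPowSeq]
  ring
end
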